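/- Let N ∈ ℕ, α > 0 and x_1,…,x_N ∈ ℝ, and define Ψ : ℝ^N → ℝ by Ψ(t) = (Σ_{j=1}^N x_j e^{−α t_j}) / (Σ_{j=1}^N e^{−α t_j}). Then for all t, t̂ ∈ ℝ^N, |Ψ(t) − Ψ(t̂)| ≤ α · ‖t − t̂‖_∞ · diam(x), where ‖t − t̂‖_∞ = max_{j=1:N} |t_j − t̂_j| and diam(x) = max_{j=1:N} x_j − min_{j=1:N} x_j. (Consequently, the componentwise distance between the consensus point computed with exact objective values and the one computed with noisy values is bounded by α times the maximum evaluation error times the diameter of the particle components.) -/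

import Mathlib

/-!
Along the segment `s ↦ t' + s d`, `d = t - t'`, the quantity `Ψ` is a weighted average of the
`x_k` with weights `w_k = e^{-α t_k}`, and its derivative is `Σ_k (x_k - Ψ) w_k (-α d_k) / Σ_k w_k`.
As `Ψ` is a convex combination of the `x_j`, each `|x_k - Ψ|` is at most `diam(x)`, so the
derivative is bounded by `α ‖d‖_∞ diam(x)` and the mean value inequality concludes.
-/

noncomputable section

/-- The diameter of a vector `x ∈ ℝ^N`: `max_j x_j - min_j x_j`. -/
def vdiam {N : ℕ} (x : Fin N → ℝ) : ℝ := (⨆ j, x j) - (⨅ j, x j)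

/-- The weighted softmin average `Ψ(t) = (Σ_j x_j e^{-α t_j}) / (Σ_j e^{-α t_j})`. -/
def Psi {N : ℕ} (α : ℝ) (x : Fin N → ℝ) (t : Fin N → ℝ) : ℝ :=
  (∑ j, x j * Real.exp (-α * t j)) / (∑ j, Real.exp (-α * t j))

open Finset

theorem hasDerivAt_weightedAverage {ι : Type*} [Fintype ι] (x : ι → ℝ) {w : ι → ℝ → ℝ}
    {w' : ι → ℝ} {s : ℝ} (hw : ∀ k, HasDerivAt (w k) (w' k) s) (hW : ∑ k, w k s ≠ 0) :
    HasDerivAt (fun s ↦ (∑ k, x k * w k s) / ∑ k, w k s)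
      ((∑ k, (x k - (∑ j, x j * w j s) / ∑ j, w j s) * w' k) / ∑ k, w k s) s := by
  refine ((HasDerivAt.fun_sum fun k _ ↦ (hw k).const_mul (x k)).div
    (HasDerivAt.fun_sum fun k _ ↦ hw k) hW).congr_deriv ?_
  simp only [sub_mul, sum_sub_distrib, div_mul_eq_mul_div, ← sum_div, ← mul_sum]
  field_simp

theorem abs_sum_mul_mul_le {ι : Type*} [Fintype ι] {a c w : ι → ℝ} {A C : ℝ}
    (ha : ∀ k, |a k| ≤ A) (hc : ∀ k, |c k| ≤ C) (hw : ∀ k, 0 ≤ w k) :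
    |∑ k, a k * (w k * c k)| ≤ A * C * ∑ k, w k := by
  rw [mul_sum]
  refine (abs_sum_le_sum_abs _ _).trans (sum_le_sum fun k _ ↦ ?_)
  rw [abs_mul, abs_mul, abs_of_nonneg (hw k)]
  calc |a k| * (w k * |c k|) ≤ A * (w k * C) :=
        mul_le_mul (ha k) (mul_le_mul_of_nonneg_left (hc k) (hw k))
          (mul_nonneg (hw k) (abs_nonneg _))
          ((abs_nonneg _).trans (ha k))
    _ = A * C * w k := by ring

theorem abs_sub_le_vdiam {N : ℕ} (x : Fin N → ℝ) (i j : Fin N) : |x i - x j| ≤ vdiam x := by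
  have hx := (Set.finite_range x).bddAbove
  have hx' := (Set.finite_range x).bddBelow
  rw [abs_sub_le_iff, vdiam]
  constructor <;> linarith [le_ciSup hx i, le_ciSup hx j, ciInf_le hx' i, ciInf_le hx' j]

theorem abs_sub_weightedAverage_le_vdiam {N : ℕ} (x w : Fin N → ℝ) (hw : ∀ j, 0 ≤ w j)
    (hW : 0 < ∑ j, w j) (k : Fin N) :
    |x k - (∑ j, x j * w j) / ∑ j, w j| ≤ vdiam x := by
  have : x k - (∑ j, x j * w j) / ∑ j, w j = (∑ j, (x k - x j) * w j) / ∑ j, w j := by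
    simp only [sub_mul, sum_sub_distrib, ← mul_sum]
    field_simp
  rw [this, abs_div, abs_of_pos hW, div_le_iff₀ hW]
  simpa using abs_sum_mul_mul_le (c := fun _ ↦ 1) (abs_sub_le_vdiam x k) (fun _ ↦ abs_one.le) hw

theorem hasDerivAt_Psi_line {N : ℕ} [Nonempty (Fin N)] (α : ℝ) (x t d : Fin N → ℝ) (s : ℝ) :
    HasDerivAt (fun s ↦ Psi α x (t + s • d))
      ((∑ k, (x k - Psi α x (t + s • d)) *
          (Real.exp (-α * (t + s • d) k) * (-α * d k))) /
        ∑ k, Real.exp (-α * (t + s • d) k)) s := by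
  refine hasDerivAt_weightedAverage x (fun k ↦ ?_) (sum_pos (fun k _ ↦ Real.exp_pos _)
    univ_nonempty).ne'
  simpa using ((((hasDerivAt_id s).mul_const (d k)).const_add (t k)).const_mul (-α)).exp

theorem abs_Psi_sub_le {N : ℕ} [Nonempty (Fin N)] {α δ : ℝ} (hα : 0 ≤ α) (x : Fin N → ℝ)
    {t t' : Fin N → ℝ} (hδ : ∀ k, |t k - t' k| ≤ δ) :
    |Psi α x t - Psi α x t'| ≤ α * δ * vdiam x := by
  set d := t - t'
  have hbound (s : ℝ) : ‖(∑ k, (x k - Psi α x (t' + s • d)) *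
      (Real.exp (-α * (t' + s • d) k) * (-α * d k))) /
        ∑ k, Real.exp (-α * (t' + s • d) k)‖ ≤ α * δ * vdiam x := by
    have hW : 0 < ∑ k, Real.exp (-α * (t' + s • d) k) :=
      sum_pos (fun k _ ↦ Real.exp_pos _) univ_nonempty
    have hc (k : Fin N) : |-α * d k| ≤ α * δ := by
      rw [abs_mul, abs_neg, abs_of_nonneg hα]
      exact mul_le_mul_of_nonneg_left (hδ k) hα
    rw [Real.norm_eq_abs, abs_div, abs_of_pos hW, div_le_iff₀ hW, mul_comm _ (vdiam x)]
    exact abs_sum_mul_mul_le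
      (abs_sub_weightedAverage_le_vdiam x _ (fun k ↦ (Real.exp_pos _).le) hW) hc
      (fun k ↦ (Real.exp_pos _).le)
  have := norm_image_sub_le_of_norm_deriv_le_segment_01'
    (fun s _ ↦ (hasDerivAt_Psi_line α x t' d s).hasDerivWithinAt) (fun s _ ↦ hbound s)
  simpa [d] using this

/-- For all `t, t̂ ∈ ℝ^N`, `|Ψ(t) - Ψ(t̂)| ≤ α ‖t - t̂‖_∞ diam(x)`. -/
theorem stmt10 {N : ℕ} (hN : 1 ≤ N) (α : ℝ) (hα : 0 < α)
    (x : Fin N → ℝ) (t t' : Fin N → ℝ) :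
    |Psi α x t - Psi α x t'| ≤ α * (⨆ j, |t j - t' j|) * vdiam x := by
  have : Nonempty (Fin N) := ⟨⟨0, hN⟩⟩
  exact abs_Psi_sub_le hα.le x fun k ↦
    le_ciSup (f := fun j ↦ |t j - t' j|) (Set.finite_range _).bddAbove k
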